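/- Let $A^1,\dots,A^N$ solve the second-order Lohe matrix model $m(\ddot A^i (A^i)^T + \dot A^i(\dot A^i)^T) = -\gamma \dot A^i (A^i)^T + \frac{\kappa}{2N}\sum_{j=1}^N (A^j (A^i)^T - A^i (A^j)^T)$ with $m,\gamma,\kappa>0$ and initial data satisfying $A^i(0)(A^i(0))^T = I_d$ and $\dot A^i(0)(A^i(0))^T + A^i(0)(\dot A^i(0))^T = 0$. Then $A^i(t)(A^i(t))^T = I_d$ for all $t \geq 0$ and all $i$, i.e., the orthogonality constraint is preserved along the flow. -/

import Mathlib

/-! For a single oscillator put `Y = Ȧ Aᵀ + A Ȧᵀ = d/dt (A Aᵀ)`. Adding the equation of motion to its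
transpose cancels the coupling term, which is skew-symmetric, and leaves the linear equation
`m Ẏ = -γ Y`. Since `Y 0 = 0`, Grönwall's inequality forces `Y ≡ 0` on `[0, ∞)`, so `A Aᵀ` keeps
its initial value `I`. -/

open scoped BigOperators
open Matrix

attribute [local instance] Matrix.frobeniusNormedAddCommGroup Matrix.frobeniusNormedSpace

attribute [local instance] Matrix.frobeniusNormedRing Matrix.frobeniusNormedAlgebra

open Set

theorem HasDerivAt.matrix_transpose {m n : Type*} [Fintype m] [Fintype n]
    {f : ℝ → Matrix m n ℝ} {f' : Matrix m n ℝ} {x : ℝ} (hf : HasDerivAt f f' x) :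
    HasDerivAt (fun y => (f y)ᵀ) f'ᵀ x :=
  (transposeLinearEquiv m n ℝ ℝ).toLinearMap.toContinuousLinearMap.hasFDerivAt.comp_hasDerivAt x hf

theorem HasDerivAt.matrix_mul_transpose {n : Type*} [Fintype n] [DecidableEq n]
    {f g : ℝ → Matrix n n ℝ} {f' g' : Matrix n n ℝ} {x : ℝ}
    (hf : HasDerivAt f f' x) (hg : HasDerivAt g g' x) :
    HasDerivAt (fun y => f y * (g y)ᵀ) (f' * (g x)ᵀ + f x * g'ᵀ) x :=
  hf.mul hg.matrix_transpose

theorem Matrix.add_transpose_eq_smul_of_smul_eq_add_skew {n K : Type*} [Field K]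
    {X P S : Matrix n n K} {m γ : K} (hm : m ≠ 0) (h : m • X = -γ • P + S) (hS : Sᵀ = -S) :
    X + Xᵀ = -(γ / m) • (P + Pᵀ) := by
  have hsum : m • (X + Xᵀ) = -γ • (P + Pᵀ) := by
    rw [smul_add, ← transpose_smul, h, transpose_add, hS, transpose_smul]
    module
  rw [← inv_smul_smul₀ hm (X + Xᵀ), hsum, smul_smul, inv_mul_eq_div, neg_div]

theorem Matrix.transpose_smul_sum_mul_transpose_sub {ι n K : Type*} [Fintype n] [CommRing K]
    (s : Finset ι) (c : K) (M : ι → Matrix n n K) (B : Matrix n n K) :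
    (c • ∑ j ∈ s, (M j * Bᵀ - B * (M j)ᵀ))ᵀ = -(c • ∑ j ∈ s, (M j * Bᵀ - B * (M j)ᵀ)) := by
  simp only [transpose_smul, transpose_sum, transpose_sub, transpose_mul, transpose_transpose,
    ← smul_neg, ← Finset.sum_neg_distrib, neg_sub]

theorem mul_transpose_self_eq_of_damped_skew_forcing {n : Type*} [Fintype n] [DecidableEq n]
    {f S : ℝ → Matrix n n ℝ} {m γ : ℝ} (hm : m ≠ 0) (hf : ContDiff ℝ 2 f)
    (hS : ∀ s, (S s)ᵀ = -S s)
    (hODE : ∀ s, 0 ≤ s →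
      m • (deriv (deriv f) s * (f s)ᵀ + deriv f s * (deriv f s)ᵀ) =
        -γ • (deriv f s * (f s)ᵀ) + S s)
    (h0 : deriv f 0 * (f 0)ᵀ + f 0 * (deriv f 0)ᵀ = 0) {t : ℝ} (ht : 0 ≤ t) :
    f t * (f t)ᵀ = f 0 * (f 0)ᵀ := by
  have hf₁ (s : ℝ) : HasDerivAt f (deriv f s) s :=
    (hf.differentiable two_ne_zero s).hasDerivAt
  have hf₂ (s : ℝ) : HasDerivAt (deriv f) (deriv (deriv f) s) s :=
    ((contDiff_succ_iff_deriv.mp hf).2.2.differentiable one_ne_zero s).hasDerivAt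
  set P : ℝ → Matrix n n ℝ := fun s => deriv f s * (f s)ᵀ
  set Y : ℝ → Matrix n n ℝ := fun s => P s + (P s)ᵀ
  have hB (s : ℝ) : HasDerivAt (fun s => f s * (f s)ᵀ) (Y s) s := by
    rw [show Y s = deriv f s * (f s)ᵀ + f s * (deriv f s)ᵀ by simp [Y, P, transpose_mul]]
    exact (hf₁ s).matrix_mul_transpose (hf₁ s)
  have hY (s : ℝ) (hs : 0 ≤ s) : HasDerivAt Y (-(γ / m) • Y s) s := by
    have hP := (hf₂ s).matrix_mul_transpose (hf₁ s)
    rw [← add_transpose_eq_smul_of_smul_eq_add_skew hm (hODE s hs) (hS s)]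
    exact hP.add hP.matrix_transpose
  have hY₀ : Y 0 = 0 := by simpa [Y, P, transpose_mul] using h0
  have hY_zero : ∀ s ∈ Icc 0 t, Y s = 0 :=
    eq_zero_of_abs_deriv_le_mul_abs_self_of_eq_zero_right
      (continuousOn_of_forall_continuousAt fun s hs => (hY s hs.1).continuousAt)
      (fun s hs => (hY s hs.1).hasDerivWithinAt) hY₀
      (fun s _ => by rw [norm_smul, Real.norm_eq_abs, abs_neg])
  refine constant_of_has_deriv_right_zero
    (continuousOn_of_forall_continuousAt fun s _ => (hB s).continuousAt)
    (fun s hs => ?_) t ⟨ht, le_rfl⟩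
  simpa [hY_zero s (Ico_subset_Icc_self hs)] using (hB s).hasDerivWithinAt

theorem stmt5_general (d N : ℕ) (A : Fin N → ℝ → Matrix (Fin d) (Fin d) ℝ)
    (m γ κ : ℝ) (hm : 0 < m)
    (hsmooth : ∀ i, ContDiff ℝ 2 (A i))
    (hODE : ∀ i, ∀ t : ℝ, 0 ≤ t →
      m • (deriv (deriv (A i)) t * (A i t)ᵀ + deriv (A i) t * (deriv (A i) t)ᵀ) =
        -γ • (deriv (A i) t * (A i t)ᵀ) +
          (κ / (2 * N)) • ∑ j : Fin N, (A j t * (A i t)ᵀ - A i t * (A j t)ᵀ))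
    (hinit1 : ∀ i, A i 0 * (A i 0)ᵀ = 1)
    (hinit2 : ∀ i, deriv (A i) 0 * (A i 0)ᵀ + A i 0 * (deriv (A i) 0)ᵀ = 0) :
    ∀ i, ∀ t : ℝ, 0 ≤ t → A i t * (A i t)ᵀ = 1 := by
  intro i t ht
  rw [← hinit1 i]
  exact mul_transpose_self_eq_of_damped_skew_forcing hm.ne' (hsmooth i)
    (fun s => transpose_smul_sum_mul_transpose_sub _ _ _ _) (hODE i) (hinit2 i) ht

/-- the orthogonality constraint `Aⁱ(Aⁱ)ᵀ = I` is preserved along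
the second-order Lohe matrix flow. -/
theorem stmt5 (d N : ℕ) (A : Fin N → ℝ → Matrix (Fin d) (Fin d) ℝ)
    (m γ κ : ℝ) (hm : 0 < m) (hγ : 0 < γ) (hκ : 0 < κ)
    (hsmooth : ∀ i, ContDiff ℝ 2 (A i))
    (hODE : ∀ i, ∀ t : ℝ, 0 ≤ t →
      m • (deriv (deriv (A i)) t * (A i t)ᵀ + deriv (A i) t * (deriv (A i) t)ᵀ) =
        -γ • (deriv (A i) t * (A i t)ᵀ) +
          (κ / (2 * N)) • ∑ j : Fin N, (A j t * (A i t)ᵀ - A i t * (A j t)ᵀ))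
    (hinit1 : ∀ i, A i 0 * (A i 0)ᵀ = 1)
    (hinit2 : ∀ i, deriv (A i) 0 * (A i 0)ᵀ + A i 0 * (deriv (A i) 0)ᵀ = 0) :
    ∀ i, ∀ t : ℝ, 0 ≤ t → A i t * (A i t)ᵀ = 1 :=
  stmt5_general d N A m γ κ hm hsmooth hODE hinit1 hinit2
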